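/- arXiv:2211.09173 — 2 statements merged into one kernel-verified Lean document; each statement's English description precedes it below -/
import Mathlib

section
/- Let ϑ ∈ ℝ and set χ(k) = −2·arctan(ϑ·coth(kπ/2)). Then for k > 0, e^{iχ(k)/2} = sqrt( (sinh(kπ/2) − iϑ·cosh(kπ/2)) / (sinh(kπ/2) + iϑ·cosh(kπ/2)) ), where the square root is the principal branch. -/
/-! With `z = sinh(kπ/2) + iϑ·cosh(kπ/2)` the base of the square root is `conj z / z = exp(-2i·arg z)`.
Since `re z > 0`, `arg z = arctan(ϑ·coth(kπ/2)) ∈ (-π/2, π/2)`, so `-2·arg z` lies in the strip where the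
principal logarithm inverts `exp`, and the principal square root is `exp(-i·arg z) = e^{iχ(k)/2}`. -/

open Real Complex ComplexConjugate

namespace Complex

theorem arg_eq_arctan_of_re_pos {z : ℂ} (hz : 0 < z.re) : arg z = Real.arctan (z.im / z.re) := by
  have hlt : |arg z| < π / 2 := abs_arg_lt_pi_div_two_iff.2 (Or.inl hz)
  rw [← tan_arg, Real.arctan_tan (abs_lt.1 hlt).1 (abs_lt.1 hlt).2]

theorem conj_div_self_eq_exp_arg {z : ℂ} (hz : z ≠ 0) :
    conj z / z = exp (-(2 * arg z : ℝ) * I) := by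
  have hnorm : (‖z‖ : ℂ) ≠ 0 := ofReal_ne_zero.2 (norm_ne_zero_iff.2 hz)
  conv_lhs => rw [← norm_mul_exp_arg_mul_I z]
  rw [map_mul, conj_ofReal, ← exp_conj, map_mul, conj_ofReal, conj_I,
    mul_div_mul_left _ _ hnorm, ← exp_sub]
  push_cast
  ring_nf

theorem exp_cpow_of_im_mem_Ioc {w : ℂ} (h₁ : -π < w.im) (h₂ : w.im ≤ π) (c : ℂ) :
    exp w ^ c = exp (w * c) := by
  rw [cpow_def_of_ne_zero (exp_ne_zero w), log_exp h₁ h₂]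

theorem conj_div_self_cpow_half_of_re_pos {z : ℂ} (hz : 0 < z.re) :
    (conj z / z) ^ (1 / 2 : ℂ) = exp (-arg z * I) := by
  have hlt := abs_lt.1 (abs_arg_lt_pi_div_two_iff.2 (Or.inl hz))
  have him : (-(2 * arg z : ℝ) * I).im = -(2 * arg z) := by simp
  rw [conj_div_self_eq_exp_arg (ne_zero_of_re_pos hz),
    exp_cpow_of_im_mem_Ioc (by rw [him]; linarith) (by rw [him]; linarith)]
  push_cast
  ring_nf

theorem ofReal_sub_I_mul_div_ofReal_add_I_mul_cpow_half {s : ℝ} (hs : 0 < s) (y : ℝ) :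
    (((s : ℂ) - I * y) / ((s : ℂ) + I * y)) ^ (1 / 2 : ℂ) = exp (-Real.arctan (y / s) * I) := by
  have hre : 0 < ((s : ℂ) + I * y).re := by simpa using hs
  have hconj : conj ((s : ℂ) + I * y) = (s : ℂ) - I * y := by simp [sub_eq_add_neg]
  rw [← hconj, conj_div_self_cpow_half_of_re_pos hre, arg_eq_arctan_of_re_pos hre]
  simp

end Complex

/-- With `χ(k) = −2·arctan(ϑ·coth(kπ/2))`, for `k > 0` the self-adjoint extension
phase satisfies `e^{iχ(k)/2} = √((sinh(kπ/2) − iϑ·cosh(kπ/2))/(sinh(kπ/2) + iϑ·cosh(kπ/2)))`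
(principal branch square root, as principal complex power `1/2`). -/
theorem stmt15 (ϑ : ℝ) (χ : ℝ → ℝ)
    (hχ : ∀ k, χ k = -2 * Real.arctan (ϑ * (Real.cosh (k * π / 2) / Real.sinh (k * π / 2)))) :
    ∀ k : ℝ, 0 < k →
      Complex.exp (Complex.I * ((χ k : ℝ) : ℂ) / 2)
        = ((((Real.sinh (k * π / 2) : ℝ) : ℂ) - Complex.I * (ϑ : ℂ) * ((Real.cosh (k * π / 2) : ℝ) : ℂ))
            / (((Real.sinh (k * π / 2) : ℝ) : ℂ) + Complex.I * (ϑ : ℂ) * ((Real.cosh (k * π / 2) : ℝ) : ℂ)))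
          ^ ((1 / 2 : ℂ)) := by
  intro k hk
  have hs : 0 < Real.sinh (k * π / 2) := Real.sinh_pos_iff.2 (by positivity)
  rw [mul_assoc I, ← ofReal_mul, ofReal_sub_I_mul_div_ofReal_add_I_mul_cpow_half hs,
    hχ, mul_div_assoc]
  push_cast
  ring_nf
end

section
/- Let F̂ be an operator-valued function of u and suppose Ĥ_u is a family of self-adjoint operators on a Hilbert space satisfying ⟨Ĥ_u²⟩_ψ + iħ·∂_u⟨Ĥ_u⟩_ψ = ⟨F̂(u)⟩_ψ for all suitable states ψ, where F̂(u) is self-adjoint for each u. If ∂_u⟨Ĥ_u⟩_ψ ≠ 0 for some state ψ and some u, a contradiction follows: the left-hand side has nonzero imaginary part while the right-hand side is real. Hence any family Ĥ_u of self-adjoint operators satisfying Ĥ_u² + iħ·∂_uĤ_u = F̂(u) (in expectation values on a dense set of states) must satisfy ∂_u⟨Ĥ_u⟩_ψ = 0 for all such ψ. -/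
open Complex

theorem Complex.im_deriv_eq_zero_of_forall_im_eq_zero {f : ℝ → ℂ} (hf : ∀ s, (f s).im = 0)
    (u : ℝ) : (deriv f u).im = 0 := by
  have hf_conj : (fun s => star (f s)) = f := funext fun s => conj_eq_iff_im.mpr (hf s)
  -- `deriv.star` needs no differentiability: where `f` is not differentiable both sides are `0`.
  rw [← conj_eq_iff_im, ← star_def, ← deriv.star, hf_conj]

theorem Complex.eq_zero_of_add_I_mul_eq {a b d : ℂ} {c : ℝ} (hc : c ≠ 0) (ha : a.im = 0)
    (hb : b.im = 0) (hd : d.im = 0) (h : a + I * c * d = b) : d = 0 := by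
  have him : c * d.re = 0 := by simpa [ha, hb, hd] using congrArg im h
  exact Complex.ext ((mul_eq_zero.mp him).resolve_left hc) hd

/-- No self-adjoint time-dependent Hamiltonian for the `v`-clock theory: if `Ĥ_u`
and `F̂(u)` are families of symmetric operators on a complex inner product space
with `⟨Ĥ_u²⟩_ψ + iħ·∂_u⟨Ĥ_u⟩_ψ = ⟨F̂(u)⟩_ψ` for all states `ψ`, then
`∂_u⟨Ĥ_u⟩_ψ = 0` for all `ψ` and `u` (otherwise the left side would have a nonzero
imaginary part while the right side is real). -/
theorem stmt19 {E : Type*} [NormedAddCommGroup E] [InnerProductSpace ℂ E]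
    (hbar : ℝ) (hhbar : 0 < hbar)
    (H F : ℝ → E →ₗ[ℂ] E)
    (hHsym : ∀ u : ℝ, ∀ x y : E, (inner ℂ ((H u) x) y : ℂ) = inner ℂ x ((H u) y))
    (hFsym : ∀ u : ℝ, ∀ x y : E, (inner ℂ ((F u) x) y : ℂ) = inner ℂ x ((F u) y))
    (heq : ∀ (ψ : E) (u : ℝ),
      (inner ℂ ψ ((H u) ((H u) ψ)) : ℂ)
        + Complex.I * (hbar : ℂ) * deriv (fun s : ℝ => (inner ℂ ψ ((H s) ψ) : ℂ)) u
      = inner ℂ ψ ((F u) ψ)) :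
    ∀ (ψ : E) (u : ℝ), deriv (fun s : ℝ => (inner ℂ ψ ((H s) ψ) : ℂ)) u = 0 := by
  intro ψ u
  have hH : ∀ s, (H s).IsSymmetric := hHsym
  have hF : (F u).IsSymmetric := hFsym u
  have hH_sq : (inner ℂ ψ ((H u) ((H u) ψ)) : ℂ).im = 0 := by
    rw [← hHsym]
    exact inner_self_im (𝕜 := ℂ) _
  exact eq_zero_of_add_I_mul_eq hhbar.ne' hH_sq (hF.im_inner_self_apply ψ)
    (im_deriv_eq_zero_of_forall_im_eq_zero (fun s => (hH s).im_inner_self_apply ψ) u) (heq ψ u)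
end
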